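/- arXiv:1401.7085 — 6 statements merged into one kernel-verified Lean document; each statement's English description precedes it below -/
import Mathlib

section
/- Let C be an a×b matrix with entries in {0,1}, let q be a prime power, and let 𝒰 be a finite collection of submatrices of C (each specified by a choice of row indices and column indices). If q > |𝒰|·a·b, then there exists a matrix C̄ ∈ F_q^{a×b} such that (1) C̄ conforms to C, i.e. C̄_{ij} = 0 whenever C_{ij} = 0, and (2) for every U ∈ 𝒰, say of size m×n, the corresponding submatrix Ū of C̄ satisfies rank(Ū) = max{ rank(V) : V ∈ F_q^{m×n}, V conforms to U }. That is, every submatrix in 𝒰 is simultaneously rank-maximized subject to the zero pattern of C. -/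
/-!
Put an indeterminate `X (i, j)` at every position where `C` is `1`. For each `U ∈ 𝒰`, a
conforming matrix of maximal rank `r` has a nonzero `r × r` minor, so the same minor of the
generic matrix is a nonzero polynomial of degree `r ≤ a * b`, and wherever it does not vanish the
specialised submatrix has rank at least `r`. The product of these minors over `𝒰` has degree
at most `|𝒰| a b < q`, so by Schwartz–Zippel it is nonzero at some point of `F^{a×b}`, and
evaluating the generic matrix there maximises the rank on every `U` at once.
-/

/-- A matrix `V` over a type with a zero *conforms* to a 0-1 matrix `C`
(encoded as a `Bool`-valued matrix) if `V i j = 0` whenever `C i j = 0`. -/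
def Conforms {m n F : Type*} [Zero F]
    (V : Matrix m n F) (C : Matrix m n Bool) : Prop :=
  ∀ i j, C i j = false → V i j = 0

open Matrix MvPolynomial Function

theorem MvPolynomial.exists_eval_ne_zero_of_totalDegree_lt_card {σ R : Type*} [Finite σ]
    [CommRing R] [IsDomain R] [Fintype R] {p : MvPolynomial σ R} (hp : p ≠ 0)
    (hdeg : p.totalDegree < Fintype.card R) : ∃ x, eval x p ≠ 0 := by
  by_contra! h
  refine hp (eq_zero_of_eval_zero_at_prod_finset p (fun _ ↦ Finset.univ) (fun i ↦ ?_)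
    fun x _ ↦ h x)
  exact (degreeOf_le_totalDegree p i).trans_lt hdeg

theorem MvPolynomial.totalDegree_det_le {σ R n : Type*} [CommRing R] [DecidableEq n]
    [Fintype n] (M : Matrix n n (MvPolynomial σ R)) (h : ∀ i j, (M i j).totalDegree ≤ 1) :
    M.det.totalDegree ≤ Fintype.card n := by
  rw [det_apply]
  refine (totalDegree_finsetSum _ _).trans <| Finset.sup_le fun π _ ↦ ?_
  refine (totalDegree_smul_le _ _).trans <| (totalDegree_finsetProd _ _).trans ?_
  simpa using Finset.sum_le_sum fun i (_ : i ∈ Finset.univ) ↦ h (π i) i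

namespace Matrix

variable {K m n : Type*} [Field K]

theorem exists_linearIndependent_rows_of_le_rank [Finite m] [Fintype n] (M : Matrix m n K)
    {r : ℕ} (hr : r ≤ M.rank) :
    ∃ ρ : Fin r → m, LinearIndependent K (M.submatrix ρ id).row := by
  obtain ⟨κ, a, ha, hspan, hli⟩ := exists_linearIndependent' K M.row
  have : Fintype κ := have := Finite.of_injective a ha; Fintype.ofFinite κ
  have hcard : Fintype.card κ = M.rank := by
    rw [M.rank_eq_finrank_span_row, ← hspan, finrank_span_eq_card hli]
  obtain ⟨e⟩ : Nonempty (Fin r ↪ κ) :=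
    Function.Embedding.nonempty_of_card_le (by simpa [hcard])
  exact ⟨a ∘ e, hli.comp e e.injective⟩

theorem exists_submatrix_det_ne_zero [Fintype m] [Fintype n] (M : Matrix m n K) :
    ∃ (ρ : Fin M.rank → m) (σ : Fin M.rank → n), (M.submatrix ρ σ).det ≠ 0 := by
  obtain ⟨ρ, hρ⟩ := M.exists_linearIndependent_rows_of_le_rank le_rfl
  have hrank : (M.submatrix ρ id)ᵀ.rank = M.rank := by
    rw [rank_transpose, hρ.rank_matrix, Fintype.card_fin]
  obtain ⟨σ, hσ⟩ := (M.submatrix ρ id)ᵀ.exists_linearIndependent_rows_of_le_rank hrank.ge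
  refine ⟨ρ, σ, ?_⟩
  rw [← det_transpose, ← isUnit_iff_ne_zero, ← isUnit_iff_isUnit_det]
  exact linearIndependent_rows_iff_isUnit.mp hσ

theorem le_rank_of_submatrix_det_ne_zero [Fintype n] {r : ℕ} (M : Matrix m n K)
    (ρ : Fin r → m) (σ : Fin r → n) (h : (M.submatrix ρ σ).det ≠ 0) : r ≤ M.rank := by
  have hunit : IsUnit (M.submatrix ρ σ) := (isUnit_iff_isUnit_det _).mpr h.isUnit
  simpa [rank_of_isUnit _ hunit] using M.rank_submatrix_le ρ σ

theorem rank_le_card_mul_card {R : Type*} [CommRing R] [StrongRankCondition R] [Fintype m]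
    [Fintype n] (M : Matrix m n R) :
    M.rank ≤ Fintype.card m * Fintype.card n := by
  rcases (Fintype.card n).eq_zero_or_pos with hn | hn
  · simpa [hn] using M.rank_le_card_width
  · exact M.rank_le_card_height.trans (Nat.le_mul_of_pos_right _ hn)

end Matrix

theorem Conforms.submatrix {m n m' n' F : Type*} [Zero F] {V : Matrix m n F}
    {C : Matrix m n Bool} (hV : Conforms V C) (ρ : m' → m) (σ : n' → n) :
    Conforms (V.submatrix ρ σ) (C.submatrix ρ σ) :=
  fun i j ↦ hV (ρ i) (σ j)

theorem exists_conforms_forall_rank_le {m n F : Type*} [Fintype n] [Field F]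
    (C : Matrix m n Bool) :
    ∃ V : Matrix m n F, Conforms V C ∧
      ∀ W : Matrix m n F, Conforms W C → W.rank ≤ V.rank := by
  set ranks := {r : ℕ | ∃ V : Matrix m n F, Conforms V C ∧ V.rank = r}
  have hbdd : BddAbove ranks := ⟨Fintype.card n, by
    rintro _ ⟨V, -, rfl⟩
    exact V.rank_le_card_width⟩
  obtain ⟨V, hV, hVrank⟩ : sSup ranks ∈ ranks :=
    Nat.sSup_mem ⟨0, 0, fun _ _ _ ↦ rfl, rank_zero⟩ hbdd
  exact ⟨V, hV, fun W hW ↦ hVrank ▸ le_csSup hbdd ⟨W, hW, rfl⟩⟩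

section GenericMatrix

variable {m n : Type*} (R : Type*) [CommSemiring R] (C : Matrix m n Bool)

noncomputable def genericMatrix : Matrix m n (MvPolynomial (m × n) R) :=
  of fun i j ↦ if C i j then X (i, j) else 0

variable {R C}

theorem conforms_map_eval_genericMatrix (x : m × n → R) :
    Conforms ((genericMatrix R C).map (eval x)) C := fun i j h ↦ by
  simp [genericMatrix, h]

theorem map_eval_genericMatrix_submatrix {m' n' : Type*} {ρ : m' → m} {σ : n' → n}
    {V : Matrix m' n' R} (hV : Conforms V (C.submatrix ρ σ)) {x : m × n → R}
    (hx : ∀ i j, x (ρ i, σ j) = V i j) :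
    ((genericMatrix R C).map (eval x)).submatrix ρ σ = V := by
  ext i j
  by_cases hC : C (ρ i) (σ j)
  · simp [genericMatrix, hC, hx]
  · simp [genericMatrix, hC, hV i j (by simpa using hC)]

theorem exists_det_genericMatrix_certifying_rank {F m' n' : Type*} [Field F] [Fintype m']
    [Fintype n'] {ρ : m' → m} {σ : n' → n} (hρ : Injective ρ) (hσ : Injective σ)
    {V : Matrix m' n' F} (hV : Conforms V (C.submatrix ρ σ)) :
    ∃ p : MvPolynomial (m × n) F, p ≠ 0 ∧ p.totalDegree ≤ V.rank ∧
      ∀ x, eval x p ≠ 0 →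
        V.rank ≤ (((genericMatrix F C).map (eval x)).submatrix ρ σ).rank := by
  obtain ⟨α, β, hdet⟩ := V.exists_submatrix_det_ne_zero
  set p := ((genericMatrix F C).submatrix (ρ ∘ α) (σ ∘ β)).det
  have eval_p (x : m × n → F) :
      eval x p = ((((genericMatrix F C).map (eval x)).submatrix ρ σ).submatrix α β).det := by
    rw [RingHom.map_det, RingHom.mapMatrix_apply, submatrix_submatrix, submatrix_map]
  refine ⟨p, fun hp ↦ hdet ?_, ?_, fun x hx ↦ ?_⟩
  · set y := extend (Prod.map ρ σ) (fun ij ↦ V ij.1 ij.2) 0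
    have hy (i : m') (j : n') : y (ρ i, σ j) = V i j := (hρ.prodMap hσ).extend_apply _ _ (i, j)
    simpa [map_eval_genericMatrix_submatrix hV hy, hp] using (eval_p y).symm
  · refine (totalDegree_det_le _ fun i j ↦ ?_).trans (Fintype.card_fin _).le
    by_cases hC : C (ρ (α i)) (σ (β j)) <;> simp [genericMatrix, hC, totalDegree_X]
  · exact le_rank_of_submatrix_det_ne_zero _ α β (eval_p x ▸ hx)

end GenericMatrix

/-- **Lemma 1 (rank-maximizing completion).**
Let `C` be an `a × b` 0-1 matrix, `q` a prime power (realized as the cardinality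
of a finite field `F`), and `𝒰` a finite collection of submatrices of `C`, each
given by a set of row indices and a set of column indices.  If `q > |𝒰|·a·b`,
then there is a matrix `C̄ ∈ F^{a×b}` conforming to `C` such that for every
`U ∈ 𝒰` the corresponding submatrix `Ū` of `C̄` has rank equal to the maximum
rank of all matrices conforming to `U`. -/
theorem rank_maximizing_completion
    {a b q : ℕ} (F : Type) [Field F] [Fintype F]
    (hFq : Fintype.card F = q)
    (C : Matrix (Fin a) (Fin b) Bool)
    (𝒰 : Finset (Finset (Fin a) × Finset (Fin b)))
    (hq : 𝒰.card * a * b < q) :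
    ∃ Cbar : Matrix (Fin a) (Fin b) F,
      Conforms Cbar C ∧
      ∀ U ∈ 𝒰,
        IsGreatest
          {r : ℕ | ∃ V : Matrix ↥U.1 ↥U.2 F,
              Conforms V (C.submatrix (Subtype.val : ↥U.1 → Fin a)
                (Subtype.val : ↥U.2 → Fin b)) ∧ V.rank = r}
          ((Cbar.submatrix (Subtype.val : ↥U.1 → Fin a)
            (Subtype.val : ↥U.2 → Fin b)).rank) := by
  choose V hV hVmax using fun U : Finset (Fin a) × Finset (Fin b) ↦
    exists_conforms_forall_rank_le (F := F)
      (C.submatrix (Subtype.val : U.1 → Fin a) (Subtype.val : U.2 → Fin b))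
  choose p hp0 hpdeg hprank using fun U ↦
    exists_det_genericMatrix_certifying_rank Subtype.val_injective Subtype.val_injective (hV U)
  have hrank (U : Finset (Fin a) × Finset (Fin b)) : (V U).rank ≤ a * b :=
    (V U).rank_le_card_mul_card.trans <| Nat.mul_le_mul
      ((Fintype.card_subtype_le _).trans_eq (Fintype.card_fin a))
      ((Fintype.card_subtype_le _).trans_eq (Fintype.card_fin b))
  have hdeg : (∏ U ∈ 𝒰, p U).totalDegree < Fintype.card F := calc
    _ ≤ ∑ U ∈ 𝒰, (p U).totalDegree := totalDegree_finsetProd _ _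
    _ ≤ ∑ _U ∈ 𝒰, a * b := Finset.sum_le_sum fun U _ ↦ (hpdeg U).trans (hrank U)
    _ < Fintype.card F := by simpa [hFq, mul_assoc] using hq
  obtain ⟨x, hx⟩ := exists_eval_ne_zero_of_totalDegree_lt_card
    (Finset.prod_ne_zero_iff.mpr fun U _ ↦ hp0 U) hdeg
  rw [map_prod, Finset.prod_ne_zero_iff] at hx
  refine ⟨(genericMatrix F C).map (eval x), conforms_map_eval_genericMatrix x, fun U hU ↦
    ⟨⟨_, (conforms_map_eval_genericMatrix x).submatrix _ _, rfl⟩, ?_⟩⟩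
  rintro _ ⟨W, hW, rfl⟩
  exact (hVmax U W hW).trans (hprank U x (hx U hU))
end

section
/- Let F be a field and let C be an a×b matrix with entries in {0,1}. Then max{ rank(V) : V ∈ F^{a×b}, V conforms to C } equals the term rank of C. In particular, the maximal rank achievable by matrices conforming to a given 0-1 matrix is the same over every field. -/
open Function

namespace Matrix

theorem injective_of_det_submatrix_ne_zero {m n R ι : Type*} [CommRing R] [Fintype ι]
    [DecidableEq ι] {A : Matrix m n R} {r : ι → m} {c : ι → n}
    (h : (A.submatrix r c).det ≠ 0) :
    Injective r ∧ Injective c := by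
  constructor
  · intro x y hxy
    by_contra hne
    exact h (det_zero_of_row_eq hne (funext fun l => by simp only [submatrix_apply, hxy]))
  · intro x y hxy
    by_contra hne
    exact h (det_zero_of_column_eq hne fun l => by simp only [submatrix_apply, hxy])

variable {m n K : Type*} [Fintype n] [Field K]

theorem exists_linearIndependent_cols (A : Matrix m n K) :
    ∃ c : Fin A.rank → n, LinearIndependent K (A.col ∘ c) := by
  obtain ⟨κ, c, hc, hspan, hli⟩ := exists_linearIndependent' K A.col
  have : Finite κ := Finite.of_injective c hc
  have : Fintype κ := Fintype.ofFinite κ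
  have hcard : Fintype.card κ = A.rank := by
    rw [A.rank_eq_finrank_span_cols, ← hspan, finrank_span_eq_card hli]
  let e : Fin A.rank ≃ κ := (Fintype.equivFinOfCardEq hcard).symm
  exact ⟨c ∘ e, hli.comp e e.injective⟩

theorem exists_submatrix_det_ne_zero_s3 [Fintype m] (A : Matrix m n K) :
    ∃ (r : Fin A.rank → m) (c : Fin A.rank → n), (A.submatrix r c).det ≠ 0 := by
  obtain ⟨c, hc⟩ := A.exists_linearIndependent_cols
  have hrank : (A.submatrix id c)ᵀ.rank = A.rank := by
    rw [rank_transpose, rank_eq_finrank_span_cols]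
    exact (finrank_span_eq_card hc).trans (Fintype.card_fin _)
  obtain ⟨r, hr⟩ := (A.submatrix id c)ᵀ.exists_linearIndependent_cols
  refine ⟨r ∘ Fin.cast hrank.symm, c, ?_⟩
  have hrows : LinearIndependent K (A.submatrix (r ∘ Fin.cast hrank.symm) c).row :=
    hr.comp _ (Fin.cast_injective _)
  exact ((isUnit_iff_isUnit_det _).mp (linearIndependent_rows_iff_isUnit.mp hrows)).ne_zero

theorem exists_perm_forall_ne_zero_of_det_ne_zero {R : Type*} [CommRing R] [DecidableEq n]
    {M : Matrix n n R} (h : M.det ≠ 0) : ∃ σ : Equiv.Perm n, ∀ i, M (σ i) i ≠ 0 := by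
  contrapose! h
  rw [det_apply]
  refine Finset.sum_eq_zero fun σ _ => ?_
  obtain ⟨i, hi⟩ := h σ
  rw [Finset.prod_eq_zero (f := fun j => M (σ j) j) (Finset.mem_univ i) hi, smul_zero]

theorem exists_injective_forall_ne_zero [Fintype m] (A : Matrix m n K) :
    ∃ (r : Fin A.rank → m) (c : Fin A.rank → n),
      Injective r ∧ Injective c ∧ ∀ l, A (r l) (c l) ≠ 0 := by
  obtain ⟨r, c, hdet⟩ := A.exists_submatrix_det_ne_zero_s3
  obtain ⟨hr, hc⟩ := injective_of_det_submatrix_ne_zero hdet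
  obtain ⟨σ, hσ⟩ := exists_perm_forall_ne_zero_of_det_ne_zero hdet
  exact ⟨r ∘ σ, c, hr.comp σ.injective, hc, hσ⟩

theorem rank_submatrix_one_mul_submatrix_one [DecidableEq m] [DecidableEq n] {k : ℕ}
    {r : Fin k → m} {c : Fin k → n} (hr : Injective r) (hc : Injective c) :
    ((1 : Matrix m m K).submatrix id r * (1 : Matrix n n K).submatrix c id).rank = k := by
  refine le_antisymm ?_ ?_
  · exact (rank_mul_le_left _ _).trans ((rank_le_card_width _).trans_eq (Fintype.card_fin k))
  calc k = (1 : Matrix (Fin k) (Fin k) K).rank := by rw [rank_one, Fintype.card_fin]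
    _ = (((1 : Matrix m m K).submatrix id r * (1 : Matrix n n K).submatrix c id).submatrix
          r c).rank := by
      rw [submatrix_mul _ _ _ id _ bijective_id]
      simp only [submatrix_submatrix, id_comp, comp_id, submatrix_one _ hr, submatrix_one _ hc,
        mul_one]
    _ ≤ _ := rank_submatrix_le _ _ _

end Matrix

section Conforms

variable {m n K : Type*} [Fintype n] [Field K] {C : Matrix m n Bool}

theorem Conforms.exists_injective_forall_eq_true [Fintype m] {V : Matrix m n K}
    (hV : Conforms V C) :
    ∃ (r : Fin V.rank → m) (c : Fin V.rank → n),
      Injective r ∧ Injective c ∧ ∀ l, C (r l) (c l) = true := by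
  obtain ⟨r, c, hr, hc, hne⟩ := V.exists_injective_forall_ne_zero
  exact ⟨r, c, hr, hc, fun l => Bool.not_eq_false _ |>.mp fun h => hne l (hV _ _ h)⟩

theorem exists_conforms_rank_eq [DecidableEq m] [DecidableEq n] {k : ℕ} {r : Fin k → m}
    {c : Fin k → n} (hr : Injective r) (hc : Injective c) (hC : ∀ l, C (r l) (c l) = true) :
    ∃ V : Matrix m n K, Conforms V C ∧ V.rank = k := by
  -- the matrix with ones exactly at the positions `(r l, c l)`
  refine ⟨(1 : Matrix m m K).submatrix id r * (1 : Matrix n n K).submatrix c id, ?_,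
    Matrix.rank_submatrix_one_mul_submatrix_one hr hc⟩
  intro x y hxy
  simp only [Matrix.mul_apply, Matrix.submatrix_apply, id_eq, Matrix.one_apply]
  refine Finset.sum_eq_zero fun l _ => ?_
  by_cases hx : x = r l
  · subst hx
    have hy : c l ≠ y := by
      rintro rfl
      exact Bool.false_ne_true (hxy.symm.trans (hC l))
    rw [if_neg hy, mul_zero]
  · rw [if_neg hx, zero_mul]

end Conforms

/-- The maximal rank achievable by matrices over a field `F` conforming to a
given 0-1 matrix `C` equals the term rank of `C`, i.e. the maximum number of
1-entries of `C` no two of which lie in the same row or in the same column.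
(In particular this maximal rank is the same over every field.) -/
theorem max_conforming_rank_eq_term_rank
    {a b : ℕ} (F : Type) [Field F] (C : Matrix (Fin a) (Fin b) Bool) :
    sSup {r : ℕ | ∃ V : Matrix (Fin a) (Fin b) F, Conforms V C ∧ V.rank = r} =
    sSup {k : ℕ | ∃ (i : Fin k → Fin a) (j : Fin k → Fin b),
        Function.Injective i ∧ Function.Injective j ∧
        ∀ l, C (i l) (j l) = true} := by
  congr 1
  ext k
  constructor
  · rintro ⟨V, hV, rfl⟩
    exact hV.exists_injective_forall_eq_true
  · rintro ⟨i, j, hi, hj, hC⟩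
    exact exists_conforms_rank_eq hi hj hC
end

section
/- Let C be an m×n matrix with entries in {0,1}, let F be a field, and let C̄ ∈ F^{m×n} be a matrix conforming to C whose rank is maximal among all matrices in F^{m×n} conforming to C; write r = rank(C̄). Then there exists a partition of the row index set {1,…,m} into two disjoint sets A_1 and A_2 such that |{ j : C_{ij} = 1 for some i ∈ A_1 }| + |A_2| = r. -/
/-!
Read `C` as a bipartite graph between rows and columns and take a vertex cover `R ∪ S`
(rows `R`, columns `S`) of minimum size. By König's theorem there is a matching of size
`|R| + |S|`; its partial permutation matrix conforms to `C`, so `|R| + |S| ≤ rank C̄`.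
Conversely every nonzero entry of `C̄` lies in a row of `R` or in a column hit by `Rᶜ`, and
those columns lie in `S`, so `rank C̄ ≤ |R| + |hit(Rᶜ)| ≤ |R| + |S|`. Hence `A₁ = Rᶜ`, `A₂ = R`.
-/

open Finset

namespace Matrix

variable {m n F : Type*} [Fintype n] [Field F]

theorem rank_add_le (A B : Matrix m n F) : (A + B).rank ≤ A.rank + B.rank := by
  rw [rank, rank, rank, mulVecLin_add]
  exact (Submodule.finrank_mono (LinearMap.range_add_le _ _)).trans
    (Submodule.finrank_add_le_finrank_add_finrank _ _)

theorem rank_le_card_add_card [Fintype m] [DecidableEq m] (A : Matrix m n F) (R : Finset m)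
    (T : Finset n) (hA : ∀ i j, i ∉ R → j ∉ T → A i j = 0) : A.rank ≤ #R + #T := by
  set AR : Matrix m n F := of fun i j => if i ∈ R then A i j else 0
  set AT : Matrix m n F := of fun i j => if i ∈ R then 0 else A i j
  have hsplit : A = AR + AT := by
    ext i j
    by_cases hi : i ∈ R <;> simp [AR, AT, hi]
  have hAR : AR.rank ≤ #R :=
    rank_le_card_of_support_subset _ _ fun i hi => by_contra fun hiR => hi <| by
      ext j; simp [AR, show i ∉ R from hiR]
  have hAT : AT.rank ≤ #T := by
    rw [← rank_transpose]
    refine rank_le_card_of_support_subset _ _ fun j hj => by_contra fun hjT => hj <| by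
      ext i
      by_cases hi : i ∈ R <;> simp [AT, hi, hA i j _ hjT]
  calc A.rank = (AR + AT).rank := by rw [← hsplit]
    _ ≤ #R + #T := (rank_add_le _ _).trans (add_le_add hAR hAT)

end Matrix

section BipartiteCover

variable {α β : Type*} (r : α → β → Prop)

/-- `R ∪ S` is a vertex cover of the bipartite graph of `r`. -/
def IsBipartiteCover (R : Finset α) (S : Finset β) : Prop :=
  ∀ a b, r a b → a ∈ R ∨ b ∈ S

def IsMinBipartiteCover (R : Finset α) (S : Finset β) : Prop :=
  IsBipartiteCover r R S ∧ ∀ R' S', IsBipartiteCover r R' S' → #R + #S ≤ #R' + #S'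

theorem exists_isMinBipartiteCover [Fintype α] [Fintype β] :
    ∃ R S, IsMinBipartiteCover r R S := by
  classical
  obtain ⟨⟨R, S⟩, hcover, hmin⟩ := exists_min_image
    (univ.filter fun p : Finset α × Finset β => IsBipartiteCover r p.1 p.2)
    (fun p => #p.1 + #p.2)
    ⟨(univ, univ), mem_filter.2 ⟨mem_univ _, fun a _ _ => .inl (mem_univ a)⟩⟩
  exact ⟨R, S, (mem_filter.1 hcover).2,
    fun R' S' h => hmin (R', S') (mem_filter.2 ⟨mem_univ _, h⟩)⟩

variable {r}

theorem IsMinBipartiteCover.flip {R : Finset α} {S : Finset β} (h : IsMinBipartiteCover r R S) :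
    IsMinBipartiteCover (flip r) S R :=
  ⟨fun b a hab => (h.1 a b hab).symm,
    fun S' R' h' => by simpa only [add_comm] using h.2 R' S' fun a b hab => (h' b a hab).symm⟩

/-- Hall's condition for `R` holds: if `T ⊆ R` had fewer neighbours `N` outside `S`, replacing
`T` by `N` would give a smaller cover. -/
theorem IsMinBipartiteCover.exists_injective [Fintype β] {R : Finset α} {S : Finset β}
    (h : IsMinBipartiteCover r R S) :
    ∃ f : R → β, f.Injective ∧ ∀ a : R, r a (f a) ∧ f a ∉ S := by
  classical
  let N : R → Finset β := fun a => univ.filter fun b => r a b ∧ b ∉ S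
  suffices hall : ∀ T : Finset R, #T ≤ #(T.biUnion N) by
    obtain ⟨f, hf, hfN⟩ := (all_card_le_biUnion_card_iff_exists_injective N).1 hall
    exact ⟨f, hf, fun a => by simpa [N] using hfN a⟩
  intro T
  set T' := T.map (Function.Embedding.subtype (· ∈ R))
  have hT'R : T' ⊆ R := by
    intro a ha
    obtain ⟨x, -, rfl⟩ := mem_map.1 ha
    exact x.2
  have hcover : IsBipartiteCover r (R \ T') (S ∪ T.biUnion N) := by
    intro a b hab
    by_cases haR : a ∈ R
    · by_cases haT : a ∈ T'
      · obtain ⟨x, hxT, rfl⟩ := mem_map.1 haT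
        by_cases hbS : b ∈ S
        · exact .inr (mem_union_left _ hbS)
        · exact .inr <| mem_union_right _ <|
            mem_biUnion.2 ⟨x, hxT, mem_filter.2 ⟨mem_univ _, hab, hbS⟩⟩
      · exact .inl (mem_sdiff.2 ⟨haR, haT⟩)
    · exact .inr (mem_union_left _ ((h.1 a b hab).resolve_left haR))
  have hmin := h.2 _ _ hcover
  have hsdiff : #(R \ T') = #R - #T := by rw [card_sdiff_of_subset hT'R, card_map]
  have hTR : #T ≤ #R := by simpa [T'] using card_le_card hT'R
  have hunion := card_union_le S (T.biUnion N)
  omega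

/-- König's theorem. -/
theorem IsMinBipartiteCover.exists_matching [Fintype α] [Fintype β] {R : Finset α} {S : Finset β}
    (h : IsMinBipartiteCover r R S) :
    ∃ (ρ : R ⊕ S → α) (κ : R ⊕ S → β), ρ.Injective ∧ κ.Injective ∧ ∀ k, r (ρ k) (κ k) := by
  obtain ⟨f, hf, hfr⟩ := h.exists_injective
  obtain ⟨g, hg, hgr⟩ := h.flip.exists_injective
  refine ⟨Sum.elim Subtype.val g, Sum.elim f Subtype.val,
    Subtype.val_injective.sumElim hg fun a b hab => (hgr b).2 (hab ▸ a.2),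
    hf.sumElim Subtype.val_injective fun a b hab => (hfr a).2 (hab ▸ b.2), ?_⟩
  rintro (a | b)
  exacts [(hfr a).1, (hgr b).1]

end BipartiteCover

section Conforms

variable {m n F : Type*} [Fintype n] [Field F]

def hitColumns (C : Matrix m n Bool) (A : Finset m) : Finset n :=
  univ.filter fun j => ∃ i ∈ A, C i j = true

@[simp]
theorem mem_hitColumns {C : Matrix m n Bool} {A : Finset m} {j : n} :
    j ∈ hitColumns C A ↔ ∃ i ∈ A, C i j = true := by
  simp [hitColumns]

theorem Conforms.rank_le_card_add_card_hitColumns [Fintype m] [DecidableEq m] {V : Matrix m n F}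
    {C : Matrix m n Bool} (hV : Conforms V C) (R : Finset m) :
    V.rank ≤ #R + #(hitColumns C Rᶜ) :=
  V.rank_le_card_add_card R _ fun i j hi hj => hV i j <| Bool.eq_false_iff.2 fun hC =>
    hj (mem_hitColumns.2 ⟨i, mem_compl.2 hi, hC⟩)

/-- A partial permutation matrix supported on entries `(ρ k, κ k)` where `C` is `1`. -/
theorem exists_conforms_card_le_rank {ι : Type*} [Fintype ι] (C : Matrix m n Bool)
    (ρ : ι → m) (κ : ι → n) (hρ : ρ.Injective) (hκ : κ.Injective)
    (hC : ∀ k, C (ρ k) (κ k) = true) :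
    ∃ V : Matrix m n F, Conforms V C ∧ Fintype.card ι ≤ V.rank := by
  classical
  let V : Matrix m n F := Matrix.of fun i j => if ∃ k, ρ k = i ∧ κ k = j then 1 else 0
  have hconf : Conforms V C := by
    intro i j hij
    simp only [V, Matrix.of_apply, ite_eq_right_iff, one_ne_zero, imp_false]
    rintro ⟨k, rfl, rfl⟩
    simp [hC k] at hij
  have hsub : V.submatrix ρ κ = 1 := by
    ext k l
    simp [V, Matrix.one_apply, hρ.eq_iff, hκ.eq_iff]
  refine ⟨V, hconf, ?_⟩
  calc Fintype.card ι = (1 : Matrix ι ι F).rank := Matrix.rank_one.symm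
    _ = (V.submatrix ρ κ).rank := by rw [hsub]
    _ ≤ V.rank := V.rank_submatrix_le ρ κ

end Conforms

/-- If `C̄ ∈ F^{m×n}` conforms to the 0-1 matrix `C` and has maximal rank `r`
among all matrices conforming to `C`, then the row index set can be partitioned
into sets `A₁` and `A₂` such that the number of columns hit by `A₁`
(columns `j` with `C i j = 1` for some `i ∈ A₁`) plus `|A₂|` equals `r`. -/
theorem partition_rows_of_rank_maximized
    {m n : ℕ} (F : Type) [Field F]
    (C : Matrix (Fin m) (Fin n) Bool)
    (Cbar : Matrix (Fin m) (Fin n) F)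
    (hconf : Conforms Cbar C)
    (hmax : ∀ V : Matrix (Fin m) (Fin n) F, Conforms V C → V.rank ≤ Cbar.rank) :
    ∃ A1 A2 : Finset (Fin m),
      Disjoint A1 A2 ∧ A1 ∪ A2 = Finset.univ ∧
      (Finset.univ.filter fun j : Fin n => ∃ i ∈ A1, C i j = true).card
        + A2.card = Cbar.rank := by
  obtain ⟨R, S, hRS⟩ := exists_isMinBipartiteCover fun i j => C i j = true
  obtain ⟨ρ, κ, hρ, hκ, hC⟩ := hRS.exists_matching
  obtain ⟨V, hV, hcard⟩ := exists_conforms_card_le_rank (F := F) C ρ κ hρ hκ hC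
  have hlower : #R + #S ≤ Cbar.rank := by
    simpa using hcard.trans (hmax V hV)
  have hupper := hconf.rank_le_card_add_card_hitColumns R
  have hhit : hitColumns C Rᶜ ⊆ S := fun j hj => by
    obtain ⟨i, hi, hC⟩ := mem_hitColumns.1 hj
    exact (hRS.1 i j hC).resolve_left (mem_compl.1 hi)
  have hhitS := card_le_card hhit
  refine ⟨Rᶜ, R, disjoint_compl_left, compl_sup_eq_top, ?_⟩
  -- the two filters differ only in their `Decidable` instances
  convert (show #(hitColumns C Rᶜ) + #R = Cbar.rank by omega) using 3
  ext j
  simp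
end

section
/- Let C' be an x×y matrix with entries in {0,1} and let C be the (x+y)×y matrix obtained by stacking C' on top of the y×y identity matrix I_y; rows 1,…,x of C are called forward rows and rows x+1,…,x+y are called backward rows. For a forward row i set f_i = { j : C'_{ij} = 1 }, and for the backward row x+j set f_{x+j} = { j }. Let F be a field, let A be a set of rows of C, let U_A be the submatrix of C formed by the rows in A, and let r be the maximal rank over all matrices in F^{|A|×y} conforming to U_A. Then there exists a partition A = A_1 ∪ A_2 such that |∪_{e∈A_1} f_e| + |A_2| = r; moreover, writing A_1 = A_F ∪ A_B where A_F consists of the forward rows of A_1 and A_B of the backward rows of A_1, one has |(∪_{i∈A_F} f_i) \ { j : x+j ∈ A_B }| = r − |A_B| − |A_2|. -/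
/-- Rows `Sum.inl i` are the forward rows and rows `Sum.inr j` the backward rows. -/
def stackC {x y : ℕ} (C' : Matrix (Fin x) (Fin y) Bool) :
    Matrix (Fin x ⊕ Fin y) (Fin y) Bool :=
  Matrix.of fun e j =>
    match e with
    | Sum.inl i => C' i j
    | Sum.inr j' => decide (j' = j)

/-- The sets `f_e` of the paper. -/
def fSets {x y : ℕ} (C' : Matrix (Fin x) (Fin y) Bool) :
    Fin x ⊕ Fin y → Finset (Fin y) :=
  fun e =>
    match e with
    | Sum.inl i => Finset.univ.filter fun j => C' i j = true
    | Sum.inr j' => {j'}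

open Finset Matrix Function

section Rank

variable {m n F : Type*} [Field F]

theorem Matrix.rank_diagonal_ite [Fintype m] [DecidableEq m] (s : Finset m) :
    (diagonal fun i => if i ∈ s then (1 : F) else 0).rank = #s := by
  classical
  rw [rank_diagonal, Fintype.card_subtype]
  congr 1
  ext i
  simp

variable [Fintype n]

theorem Matrix.rank_add_le_s5 (A B : Matrix m n F) : (A + B).rank ≤ A.rank + B.rank := by
  rw [Matrix.rank, Matrix.rank, Matrix.rank, mulVecLin_add]
  exact (Submodule.finrank_mono (LinearMap.range_add_le _ _)).trans
    (Submodule.finrank_add_le_finrank_add_finrank _ _)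

theorem Matrix.rank_le_card_add_card_compl [Fintype m] [DecidableEq m] (V : Matrix m n F)
    (S : Finset m) (T : Finset n) (hV : ∀ i ∈ S, ∀ j ∉ T, V i j = 0) :
    V.rank ≤ #T + #Sᶜ := by
  classical
  have hsplit : V = (diagonal fun i => if i ∈ S then (1 : F) else 0) * V *
      (diagonal fun j => if j ∈ T then (1 : F) else 0) +
      (diagonal fun i => if i ∈ Sᶜ then (1 : F) else 0) * V := by
    ext i j
    by_cases hi : i ∈ S <;> by_cases hj : j ∈ T <;> simp [hi, hj, hV]
  calc V.rank ≤ (diagonal fun j => if j ∈ T then (1 : F) else 0).rank +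
        (diagonal fun i => if i ∈ Sᶜ then (1 : F) else 0).rank := by
        rw [hsplit]
        exact (rank_add_le_s5 _ _).trans (add_le_add (rank_mul_le_right _ _) (rank_mul_le_left _ _))
    _ = #T + #Sᶜ := by rw [rank_diagonal_ite, rank_diagonal_ite]

end Rank

def rowSupport {m n : Type*} [Fintype n] (U : Matrix m n Bool) (i : m) : Finset n :=
  univ.filter fun j => U i j = true

theorem rank_le_of_conforms {m n F : Type*} [Fintype m] [Fintype n] [DecidableEq m]
    [DecidableEq n] [Field F] {V : Matrix m n F} {U : Matrix m n Bool} (hV : Conforms V U)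
    (S : Finset m) : V.rank ≤ #(S.biUnion (rowSupport U)) + #Sᶜ :=
  V.rank_le_card_add_card_compl S _ fun i hi j hj =>
    hV i j (Bool.eq_false_iff.mpr fun h => hj (mem_biUnion.mpr ⟨i, hi, by simpa [rowSupport]⟩))

section Matching

variable {m n β : Type*} [DecidableEq n] [DecidableEq β]

/-- The 0-1 matrix of a partial matching; rows sent to `Sum.inr` (dummy columns) are
unmatched. -/
def matchingMatrix (F : Type*) [Zero F] [One F] (σ : m → n ⊕ β) : Matrix m n F :=
  of fun i j => if σ i = Sum.inl j then 1 else 0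

variable {F : Type*} [Field F] [Fintype n]

theorem conforms_matchingMatrix [Fintype β] {U : Matrix m n Bool} {σ : m → n ⊕ β}
    (hσ : ∀ i, σ i ∈ (rowSupport U i).disjSum (univ : Finset β)) :
    Conforms (matchingMatrix F σ) U := by
  intro i j hij
  have : σ i ≠ Sum.inl j := fun h => by simpa [h, rowSupport, hij] using hσ i
  simp [matchingMatrix, this]

variable [Fintype m] [DecidableEq m]

theorem matchingMatrix_mul_transpose {σ : m → n ⊕ β} (hσ : Injective σ) :
    matchingMatrix F σ * (matchingMatrix F σ)ᵀ =
      diagonal fun i => if i ∈ univ.filter (fun i => (σ i).isLeft) then 1 else 0 := by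
  ext i i'
  rcases hi : σ i with j | b
  · simp [mul_apply, matchingMatrix, diagonal_apply, hi]
    rw [sum_eq_single j (fun k _ hk => by simp [Ne.symm hk]) (by simp)]
    simp [← hi, hσ.eq_iff, eq_comm]
  · simp [mul_apply, matchingMatrix, diagonal_apply, hi]

theorem card_sub_card_le_rank_matchingMatrix [Fintype β] {σ : m → n ⊕ β} (hσ : Injective σ) :
    Fintype.card m - Fintype.card β ≤ (matchingMatrix F σ).rank := by
  have hunmatched : #(univ.filter fun i => ¬ (σ i).isLeft) ≤ Fintype.card β := by
    calc #(univ.filter fun i => ¬ (σ i).isLeft)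
        = #((univ.filter fun i => ¬ (σ i).isLeft).image σ) := (card_image_of_injective _ hσ).symm
      _ ≤ #((univ : Finset β).map Embedding.inr) := by
        refine card_le_card fun k hk => ?_
        obtain ⟨i, hi, rfl⟩ := mem_image.mp hk
        obtain ⟨b, hb⟩ := Sum.isRight_iff.mp (by simpa using (mem_filter.mp hi).2)
        simp [hb]
      _ = Fintype.card β := by simp
  calc Fintype.card m - Fintype.card β ≤ #(univ.filter fun i => (σ i).isLeft) := by
        have := card_filter_add_card_filter_not (s := univ) (fun i => (σ i).isLeft)
        rw [card_univ] at this
        omega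
    _ = (matchingMatrix F σ * (matchingMatrix F σ)ᵀ).rank := by
        rw [matchingMatrix_mul_transpose hσ, rank_diagonal_ite]
    _ ≤ (matchingMatrix F σ).rank := rank_mul_le_left _ _

end Matching

theorem exists_injective_of_card_le_card_biUnion_add {ι α : Type*} [DecidableEq α]
    (t : ι → Finset α) (d : ℕ) (h : ∀ s : Finset ι, #s ≤ #(s.biUnion t) + d) :
    ∃ σ : ι → α ⊕ Fin d, Injective σ ∧ ∀ i, σ i ∈ (t i).disjSum (univ : Finset (Fin d)) := by
  refine (all_card_le_biUnion_card_iff_exists_injective _).mp fun s => ?_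
  rcases s.eq_empty_or_nonempty with rfl | hs
  · simp
  have hdummy : s.biUnion (fun i => (t i).disjSum (univ : Finset (Fin d))) =
      (s.biUnion t).disjSum univ := by
    ext (j | q)
    · simp
    · simp
      exact hs
  simpa [hdummy] using h s

theorem exists_isGreatest_rank_conforms {m n : Type*} [Fintype m] [Fintype n] [DecidableEq m]
    [DecidableEq n] (F : Type*) [Field F] (U : Matrix m n Bool) :
    ∃ S : Finset m, IsGreatest {k | ∃ V : Matrix m n F, Conforms V U ∧ V.rank = k}
      (#(S.biUnion (rowSupport U)) + #Sᶜ) := by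
  obtain ⟨S, -, hS⟩ := exists_min_image univ
    (fun S : Finset m => #(S.biUnion (rowSupport U)) + #Sᶜ) univ_nonempty
  refine ⟨S, ?_, fun k ⟨V, hV, hk⟩ => hk ▸ rank_le_of_conforms hV S⟩
  have hcover : #(S.biUnion (rowSupport U)) + #Sᶜ ≤ Fintype.card m := by
    simpa using hS ∅ (mem_univ _)
  set d := Fintype.card m - (#(S.biUnion (rowSupport U)) + #Sᶜ)
  have hall : ∀ s : Finset m, #s ≤ #(s.biUnion (rowSupport U)) + d := by
    intro s
    have hs := hS s (mem_univ s)
    have := card_compl s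
    have := card_compl S
    have := card_le_univ s
    omega
  obtain ⟨σ, hσinj, hσ⟩ := exists_injective_of_card_le_card_biUnion_add _ d hall
  refine ⟨matchingMatrix F σ, conforms_matchingMatrix hσ, le_antisymm
    (rank_le_of_conforms (conforms_matchingMatrix hσ) S) ?_⟩
  have hrank := card_sub_card_le_rank_matchingMatrix (F := F) hσinj
  rw [Fintype.card_fin] at hrank
  omega

theorem fSets_eq_rowSupport {x y : ℕ} (C' : Matrix (Fin x) (Fin y) Bool) :
    fSets C' = rowSupport (stackC C') := by
  funext e
  cases e with
  | inl i => rfl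
  | inr j =>
    ext k
    simpa [fSets, rowSupport, stackC] using eq_comm

theorem card_sdiff_add_card_filter_isRight {x y : ℕ} (C' : Matrix (Fin x) (Fin y) Bool)
    (B : Finset (Fin x ⊕ Fin y)) :
    #((B.filter fun e => e.isLeft = true).biUnion (fSets C') \
        (B.filter fun e => e.isRight = true).biUnion (fSets C')) +
      #(B.filter fun e => e.isRight = true) = #(B.biUnion (fSets C')) := by
  have hright : (B.filter fun e => e.isRight = true).biUnion (fSets C') = B.toRight := by
    ext j
    simp [fSets]
  have hcard : #(B.filter fun e => e.isRight = true) = #B.toRight := by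
    have : B.filter (fun e => e.isRight = true) = B.toRight.map Embedding.inr := by
      ext (i | j) <;> simp
    rw [this, card_map]
  have hunion : B.biUnion (fSets C') = (B.filter fun e => e.isLeft = true).biUnion (fSets C') ∪
      (B.filter fun e => e.isRight = true).biUnion (fSets C') := by
    have : B.filter (fun e => e.isLeft = true) ∪ B.filter (fun e => e.isRight = true) = B := by
      ext (i | j) <;> simp
    rw [← union_biUnion, this]
  rw [hunion, ← card_sdiff_add_card, hcard, hright]

/-- **Lemma 3 of the paper.**  Let `C` be `C'` stacked on the identity `I_y`,
let `A` be a set of rows of `C`, `U_A` the submatrix of `C` on the rows of `A`,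
and `r` the maximal rank over all matrices in `F^{|A|×y}` conforming to `U_A`.
Then `A` can be partitioned as `A = A₁ ∪ A₂` with
`|⋃_{e ∈ A₁} f_e| + |A₂| = r`; moreover, splitting `A₁ = A_F ∪ A_B` into its
forward and backward rows, `|(⋃_{i ∈ A_F} f_i) \ {j : Sum.inr j ∈ A_B}| =
r − |A_B| − |A₂|` (stated additively). -/
theorem partition_of_rank_maximized_cut
    {x y r : ℕ} (F : Type) [Field F]
    (C' : Matrix (Fin x) (Fin y) Bool)
    (A : Finset (Fin x ⊕ Fin y))
    (hr : IsGreatest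
      {k : ℕ | ∃ V : Matrix ↥A (Fin y) F,
          Conforms V ((stackC C').submatrix (Subtype.val : ↥A → Fin x ⊕ Fin y) id)
          ∧ V.rank = k} r) :
    ∃ A1 A2 : Finset (Fin x ⊕ Fin y),
      Disjoint A1 A2 ∧ A1 ∪ A2 = A ∧
      (A1.biUnion (fSets C')).card + A2.card = r ∧
      (((A1.filter fun e => e.isLeft = true).biUnion (fSets C')) \
          ((A1.filter fun e => e.isRight = true).biUnion (fSets C'))).card
        + (A1.filter fun e => e.isRight = true).card + A2.card = r := by
  obtain ⟨S, hS⟩ := exists_isGreatest_rank_conforms F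
    ((stackC C').submatrix (Subtype.val : ↥A → Fin x ⊕ Fin y) id)
  set A1 := S.image Subtype.val
  have hA1 : A1 ⊆ A := fun e he => by
    obtain ⟨e, -, rfl⟩ := mem_image.mp he
    exact e.2
  have hN : A1.biUnion (fSets C') = S.biUnion (rowSupport
      ((stackC C').submatrix (Subtype.val : ↥A → Fin x ⊕ Fin y) id)) := by
    rw [image_biUnion, fSets_eq_rowSupport]
    rfl
  have hA2 : #(A \ A1) = #Sᶜ := by
    rw [card_sdiff_of_subset hA1, card_image_of_injective _ Subtype.val_injective, card_compl,
      Fintype.card_coe]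
  have hcut : #(A1.biUnion (fSets C')) + #(A \ A1) = r := by
    rw [hN, hA2]
    exact hS.unique hr
  refine ⟨A1, A \ A1, disjoint_sdiff, union_sdiff_of_subset hA1, hcut, ?_⟩
  rw [card_sdiff_add_card_filter_isRight, hcut]
end

section
/- Let q be a prime power and let x, y be positive integers. Let C' ∈ {0,1}^{x×y}, let C be the (x+y)×y 0-1 matrix obtained by stacking C' on top of the y×y identity matrix I_y, and let 𝒜 be a nonempty finite collection of subsets of the row set {1,…,x+y}. Let C̄ ∈ F_q^{(x+y)×y} be a matrix conforming to C such that every diagonal entry of its bottom y×y block is nonzero and such that for every A ∈ 𝒜 the submatrix Ū_A of C̄ on the rows in A has rank equal to the maximal rank over all matrices conforming to U_A (the submatrix of C on rows A). Set k_f = max_{A∈𝒜} (|A| − rank(Ū_A)) and assume 1 ≤ k_f ≤ x. Let G ∈ F_q^{x×x} be a random matrix with independent entries uniform on F_q, let E be the (x+y)×(x+y) matrix whose first x columns are G stacked on the y×x zero matrix and whose last y columns are C̄, and let E^r be the matrix formed by the last k_f + y columns of E. Then with probability at least 1 − |𝒜|·k_f·(x+y)/q, for every A ∈ 𝒜 the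 submatrix E^r_A of E^r formed by the rows in A has full row rank |A|. -/
/-!
Fix `A ∈ 𝒜` and write `Ū = Ū_A`. If `E^r_A` is rank deficient, some nonzero `w` kills all of its
columns: the last `y` columns force `w` into the left kernel `V` of `Ū`, which has dimension
`|A| - rank Ū ≤ k_f`, and the first `k_f` columns say that the forward part `u` of `w` satisfies
`uᵀ G_c = 0` for the `k_f` chosen columns `G_c` of `G`. Since the bottom block of `C̄` is diagonal
with nonzero diagonal, `u ≠ 0`, so for each `w` these are `k_f` independent linear conditions on
`G`, met by a fraction `q^{-k_f}` of all `G`. The conditions depend only on the line through `w`,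
and `V` has at most `k_f q^{k_f - 1}` lines, so `E^r_A` is rank deficient with probability at most
`k_f / q`. A union bound over `𝒜` finishes the proof.
-/

open scoped Classical

/-- The matrix `E^r` formed by the last `kf + y` columns of the encoding matrix
`E = [[G, C̄_top], [0, C̄_bot]]`: its first `kf` columns are the last `kf`
columns of `G` stacked on the `y × kf` zero matrix, and its last `y` columns
are `C̄`. -/
def encER {x y kf : ℕ} {F : Type*} [Zero F] (hkfx : kf ≤ x)
    (G : Matrix (Fin x) (Fin x) F)
    (Cbar : Matrix (Fin x ⊕ Fin y) (Fin y) F) :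
    Matrix (Fin x ⊕ Fin y) (Fin kf ⊕ Fin y) F :=
  Matrix.of fun ri ci =>
    match ci with
    | Sum.inl c =>
        match ri with
        | Sum.inl i => G i ⟨x - kf + c.val, by have := c.isLt; omega⟩
        | Sum.inr _ => 0
    | Sum.inr c => Cbar ri c

open Matrix Finset
open scoped LinearAlgebra.Projectivization

theorem AddMonoidHom.card_ker_mul_card_of_surjective {G H : Type*} [AddGroup G] [AddGroup H]
    (f : G →+ H) (hf : Function.Surjective f) :
    Nat.card f.ker * Nat.card H = Nat.card G := by
  rw [← f.ker.card_mul_index, AddSubgroup.index_ker, f.range_eq_top_of_surjective hf,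
    AddSubgroup.card_top]

theorem LinearMap.card_mul_le_of_forall_exists_ne_zero {K V M W : Type*} [Field K]
    [AddCommGroup V] [Module K V] [Finite V] [AddCommGroup M] [Module K M] [Fintype M]
    [AddCommGroup W] [Module K W] (B : V →ₗ[K] M →ₗ[K] W)
    (hB : ∀ v ≠ 0, Function.Surjective (B v)) (s : Finset M)
    (hs : ∀ m ∈ s, ∃ v ≠ 0, B v m = 0) :
    #s * Nat.card W ≤ Nat.card (ℙ K V) * Fintype.card M := by
  have : Fintype (ℙ K V) := Fintype.ofFinite _
  have hcover : s ⊆ univ.biUnion fun p : ℙ K V => {m | B p.rep m = 0} := by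
    intro m hm
    obtain ⟨v, hv, hvm⟩ := hs m hm
    obtain ⟨a, ha⟩ := Projectivization.exists_smul_eq_mk_rep K v hv
    simp only [mem_biUnion, mem_univ, mem_filter, true_and]
    exact ⟨.mk K v hv, by rw [← ha, Units.smul_def, map_smul, smul_apply, hvm, smul_zero]⟩
  have hfiber (p : ℙ K V) : #{m | B p.rep m = 0} * Nat.card W = Fintype.card M := by
    rw [← Fintype.card_subtype, ← Nat.card_eq_fintype_card, ← Nat.card_eq_fintype_card]
    exact (B p.rep).toAddMonoidHom.card_ker_mul_card_of_surjective (hB _ p.rep_nonzero)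
  calc #s * Nat.card W
      ≤ (∑ p : ℙ K V, #{m | B p.rep m = 0}) * Nat.card W :=
        Nat.mul_le_mul_right _ ((card_le_card hcover).trans card_biUnion_le)
    _ = Nat.card (ℙ K V) * Fintype.card M := by
        simp only [sum_mul, hfiber, sum_const, card_univ, smul_eq_mul, Nat.card_eq_fintype_card]

theorem Projectivization.card_mul_le_of_finrank_le {K V : Type*} [Field K] [AddCommGroup V]
    [Module K V] [Finite K] {d : ℕ} (h : Module.finrank K V ≤ d) :
    Nat.card (ℙ K V) * Nat.card K ≤ d * Nat.card K ^ d := by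
  rw [Projectivization.card_of_finrank K V rfl, sum_mul]
  calc ∑ i ∈ range (Module.finrank K V), Nat.card K ^ i * Nat.card K
      ≤ ∑ _i ∈ range (Module.finrank K V), Nat.card K ^ d := by
        refine sum_le_sum fun i hi => ?_
        rw [← pow_succ]
        exact Nat.pow_le_pow_right Nat.card_pos (by grind)
    _ ≤ d * Nat.card K ^ d := by
        rw [sum_const, card_range, smul_eq_mul]
        exact Nat.mul_le_mul_right _ h

namespace Matrix

theorem vecMul_submatrix_of_injective {R ι m n : Type*} [CommSemiring R] [Fintype ι]
    [Fintype m] {f : m → ι} (hf : Function.Injective f) (w : m → R) (M : Matrix ι n R) :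
    w ᵥ* M.submatrix f id = Function.extend f w 0 ᵥ* M := by
  ext j
  refine Fintype.sum_of_injective f hf _ _ (fun i hi => ?_) (fun a => by simp [hf.extend_apply])
  simp [Function.extend_apply' _ _ _ hi]

variable {K n m ι : Type*} [Field K] [Fintype n]

def vecMulColsBilin (col : ι → m) : (n → K) →ₗ[K] Matrix n m K →ₗ[K] (ι → K) :=
  LinearMap.mk₂ K (fun u G c => (u ᵥ* G) (col c))
    (fun _ _ _ => by ext; simp [add_vecMul]) (fun _ _ _ => by ext; simp [smul_vecMul])
    (fun _ _ _ => by ext; simp [vecMul_add]) (fun _ _ _ => by ext; simp [vecMul_smul])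

theorem vecMulColsBilin_apply (col : ι → m) (u : n → K) (G : Matrix n m K) :
    vecMulColsBilin col u G = fun c => (u ᵥ* G) (col c) := rfl

theorem vecMulColsBilin_surjective [DecidableEq n] {col : ι → m}
    (hcol : Function.Injective col) {u : n → K} (hu : u ≠ 0) :
    Function.Surjective (vecMulColsBilin col u) := by
  obtain ⟨i, hi⟩ : ∃ i, u i ≠ 0 := Function.ne_iff.mp hu
  intro t
  refine ⟨vecMulVec (Pi.single i (u i)⁻¹) (Function.extend col t 0), funext fun c => ?_⟩
  simp [vecMulColsBilin_apply, vecMul_vecMulVec, hcol.extend_apply, mul_inv_cancel₀ hi]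

theorem rank_add_finrank_ker_vecMulLinear [Fintype m] (M : Matrix m n K) :
    M.rank + Module.finrank K (LinearMap.ker M.vecMulLinear) = Fintype.card m := by
  rw [← M.rank_transpose, rank, mulVecLin_transpose, LinearMap.finrank_range_add_finrank_ker,
    Module.finrank_fintype_fun_eq_card]

theorem exists_vecMul_eq_zero_of_rank_ne_card [Fintype m] {M : Matrix m n K}
    (h : M.rank ≠ Fintype.card m) : ∃ w ≠ 0, w ᵥ* M = 0 := by
  have hker : LinearMap.ker M.vecMulLinear ≠ ⊥ := fun hbot => h <| by
    rw [← M.rank_add_finrank_ker_vecMulLinear, hbot, finrank_bot, add_zero]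
  obtain ⟨w, hw, hw0⟩ := (Submodule.ne_bot_iff _).mp hker
  exact ⟨w, hw0, hw⟩

end Matrix

theorem one_sub_div_le_div_of_add_eq {good bad N c q : ℕ} (hN : good + bad = N)
    (hbad : bad * q ≤ c * N) (hq : 0 < q) (hN0 : 0 < N) :
    1 - (c : ℝ) / q ≤ good / N := by
  have hbad' : (bad : ℝ) / N ≤ c / q := by
    rw [div_le_div_iff₀ (by exact_mod_cast hN0) (by exact_mod_cast hq)]
    exact_mod_cast hbad
  have hgood : (good : ℝ) / N = 1 - bad / N := by
    rw [eq_sub_iff_add_eq, ← add_div, ← Nat.cast_add, hN, div_self (by positivity)]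
  linarith

section Encoder

variable {x y kf : ℕ} {F : Type*} [Field F]

def lastCols (hkfx : kf ≤ x) (c : Fin kf) : Fin x := ⟨x - kf + c, by omega⟩

theorem lastCols_injective (hkfx : kf ≤ x) : Function.Injective (lastCols hkfx) :=
  fun a b h => Fin.ext (by simpa [lastCols] using congrArg Fin.val h)

variable (hkfx : kf ≤ x) (G : Matrix (Fin x) (Fin x) F)
  (Cbar : Matrix (Fin x ⊕ Fin y) (Fin y) F)

theorem vecMul_encER_inl (v : Fin x ⊕ Fin y → F) (c : Fin kf) :
    (v ᵥ* encER hkfx G Cbar) (.inl c) = ((v ∘ .inl) ᵥ* G) (lastCols hkfx c) := by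
  simp [vecMul, dotProduct, encER, lastCols, Fintype.sum_sum_type]

theorem vecMul_encER_inr (v : Fin x ⊕ Fin y → F) (j : Fin y) :
    (v ᵥ* encER hkfx G Cbar) (.inr j) = (v ᵥ* Cbar) j := by
  simp [vecMul, dotProduct, encER]

variable {C' : Matrix (Fin x) (Fin y) Bool} {Cbar}

theorem eq_zero_of_vecMul_eq_zero_of_comp_inl (hconf : Conforms Cbar (stackC C'))
    (hdiag : ∀ j, Cbar (.inr j) j ≠ 0) {v : Fin x ⊕ Fin y → F} (hv : v ᵥ* Cbar = 0)
    (hinl : v ∘ Sum.inl = 0) : v = 0 := by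
  funext e
  rcases e with i | j
  · exact congrFun hinl i
  · have hj : (v ᵥ* Cbar) j = v (.inr j) * Cbar (.inr j) j := by
      rw [vecMul, dotProduct, Fintype.sum_sum_type, sum_eq_single j]
      · simp [show ∀ i, v (.inl i) = 0 from congrFun hinl]
      · intro j' _ hj'
        rw [hconf _ _ (by simp [stackC, hj']), mul_zero]
      · simp
    simpa [hdiag j, hv] using hj.symm

theorem extend_comp_inl_ne_zero (hconf : Conforms Cbar (stackC C'))
    (hdiag : ∀ j, Cbar (.inr j) j ≠ 0) {A : Finset (Fin x ⊕ Fin y)} {w : ↥A → F} (hw0 : w ≠ 0)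
    (hw : w ᵥ* Cbar.submatrix Subtype.val id = 0) :
    Function.extend Subtype.val w 0 ∘ Sum.inl ≠ 0 := by
  intro h0
  rw [vecMul_submatrix_of_injective Subtype.val_injective] at hw
  have hext := eq_zero_of_vecMul_eq_zero_of_comp_inl hconf hdiag hw h0
  exact hw0 (funext fun a => by simpa [Subtype.val_injective.extend_apply] using congrFun hext a)

theorem exists_ne_zero_of_rank_encER_submatrix_ne {A : Finset (Fin x ⊕ Fin y)}
    (hG : ((encER hkfx G Cbar).submatrix (Subtype.val : ↥A → Fin x ⊕ Fin y) id).rank ≠ A.card) :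
    ∃ w : ↥A → F, w ≠ 0 ∧ w ᵥ* Cbar.submatrix Subtype.val id = 0 ∧
      ∀ c, ((Function.extend Subtype.val w 0 ∘ Sum.inl) ᵥ* G) (lastCols hkfx c) = 0 := by
  obtain ⟨w, hw0, hw⟩ := exists_vecMul_eq_zero_of_rank_ne_card (by rwa [Fintype.card_coe])
  rw [vecMul_submatrix_of_injective Subtype.val_injective] at hw
  refine ⟨w, hw0, funext fun j => ?_, fun c => ?_⟩
  · rw [vecMul_submatrix_of_injective Subtype.val_injective, ← vecMul_encER_inr hkfx G]
    exact congrFun hw (.inr j)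
  · rw [← vecMul_encER_inl]
    exact congrFun hw (.inl c)

variable [Fintype F]

theorem card_rank_encER_submatrix_ne_mul_le (hconf : Conforms Cbar (stackC C'))
    (hdiag : ∀ j, Cbar (.inr j) j ≠ 0) (A : Finset (Fin x ⊕ Fin y))
    (hA : A.card - (Cbar.submatrix (Subtype.val : ↥A → Fin x ⊕ Fin y) id).rank ≤ kf) :
    #{G | ((encER hkfx G Cbar).submatrix (Subtype.val : ↥A → Fin x ⊕ Fin y) id).rank ≠ A.card}
      * Fintype.card F ≤ kf * Fintype.card (Matrix (Fin x) (Fin x) F) := by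
  set U := Cbar.submatrix (Subtype.val : ↥A → Fin x ⊕ Fin y) id
  set V := LinearMap.ker U.vecMulLinear
  let fwd : V →ₗ[F] Fin x → F := LinearMap.funLeft F F Sum.inl ∘ₗ
    Function.ExtendByZero.linearMap F Subtype.val ∘ₗ V.subtype
  have hB (w : V) (hw : w ≠ 0) : Function.Surjective (vecMulColsBilin (lastCols hkfx) (fwd w)) :=
    vecMulColsBilin_surjective (lastCols_injective hkfx)
      (extend_comp_inl_ne_zero hconf hdiag (by simpa using hw) w.2)
  have hbad := (vecMulColsBilin (lastCols hkfx) ∘ₗ fwd).card_mul_le_of_forall_exists_ne_zero hB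
    {G | ((encER hkfx G Cbar).submatrix Subtype.val id).rank ≠ A.card} fun G hG => by
      obtain ⟨w, hw0, hwU, hwG⟩ := exists_ne_zero_of_rank_encER_submatrix_ne hkfx G
        (mem_filter.mp hG).2
      exact ⟨⟨w, hwU⟩, fun h => hw0 (congrArg Subtype.val h), funext hwG⟩
  have hdim : Module.finrank F V ≤ kf := by
    have := U.rank_add_finrank_ker_vecMulLinear
    rw [Fintype.card_coe] at this
    change U.rank + Module.finrank F V = _ at this
    omega
  have hproj := Projectivization.card_mul_le_of_finrank_le hdim
  simp only [Nat.card_eq_fintype_card, Fintype.card_fun, Fintype.card_fin] at hbad hproj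
  refine Nat.le_of_mul_le_mul_right ?_ (by positivity : 0 < Fintype.card F ^ kf)
  calc _ = _ * Fintype.card F ^ kf * Fintype.card F := mul_right_comm _ _ _
    _ ≤ Nat.card (ℙ F V) * Fintype.card (Matrix (Fin x) (Fin x) F) * Fintype.card F :=
        Nat.mul_le_mul_right _ hbad
    _ = Nat.card (ℙ F V) * Fintype.card F * Fintype.card (Matrix (Fin x) (Fin x) F) := by
        rw [mul_right_comm]
    _ ≤ kf * Fintype.card F ^ kf * Fintype.card (Matrix (Fin x) (Fin x) F) :=
        Nat.mul_le_mul_right _ hproj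
    _ = _ := by rw [mul_right_comm]

theorem card_not_forall_rank_encER_submatrix_eq_mul_le (hconf : Conforms Cbar (stackC C'))
    (hdiag : ∀ j, Cbar (.inr j) j ≠ 0) (𝒜 : Finset (Finset (Fin x ⊕ Fin y)))
    (h𝒜 : ∀ A ∈ 𝒜, A.card - (Cbar.submatrix (Subtype.val : ↥A → Fin x ⊕ Fin y) id).rank ≤ kf) :
    #{G | ¬ ∀ A ∈ 𝒜, ((encER hkfx G Cbar).submatrix
        (Subtype.val : ↥A → Fin x ⊕ Fin y) id).rank = A.card} * Fintype.card F
      ≤ 𝒜.card * kf * Fintype.card (Matrix (Fin x) (Fin x) F) := by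
  calc _ ≤ (∑ A ∈ 𝒜, #{G | ((encER hkfx G Cbar).submatrix
          (Subtype.val : ↥A → Fin x ⊕ Fin y) id).rank ≠ A.card}) * Fintype.card F := by
        refine Nat.mul_le_mul_right _ ((card_le_card fun G hG => ?_).trans card_biUnion_le)
        simp only [mem_filter, mem_univ, true_and, not_forall, mem_biUnion] at hG ⊢
        obtain ⟨A, hA, hne⟩ := hG
        exact ⟨A, hA, hne⟩
    _ ≤ ∑ _A ∈ 𝒜, kf * Fintype.card (Matrix (Fin x) (Fin x) F) := by
        rw [sum_mul]
        exact sum_le_sum fun A hA =>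
          card_rank_encER_submatrix_ne_mul_le hkfx hconf hdiag A (h𝒜 A hA)
    _ = _ := by rw [sum_const, smul_eq_mul, mul_assoc]

end Encoder

theorem random_code_secure_whp_general
    {x y q kf : ℕ} (hx : 0 < x)
    (F : Type) [Field F] [Fintype F]
    (hFq : Fintype.card F = q)
    (C' : Matrix (Fin x) (Fin y) Bool)
    (𝒜 : Finset (Finset (Fin x ⊕ Fin y)))
    (Cbar : Matrix (Fin x ⊕ Fin y) (Fin y) F)
    (hconf : Conforms Cbar (stackC C'))
    (hdiag : ∀ j : Fin y, Cbar (Sum.inr j) j ≠ 0)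
    (hkf : kf = 𝒜.sup fun A =>
        A.card - (Cbar.submatrix (Subtype.val : ↥A → Fin x ⊕ Fin y) id).rank)
    (hkfx : kf ≤ x) :
    ((Finset.univ.filter fun G : Matrix (Fin x) (Fin x) F =>
        ∀ A ∈ 𝒜,
          ((encER hkfx G Cbar).submatrix
            (Subtype.val : ↥A → Fin x ⊕ Fin y) id).rank = A.card).card : ℝ) /
        (Fintype.card (Matrix (Fin x) (Fin x) F) : ℝ)
      ≥ 1 - ((𝒜.card : ℝ) * (kf : ℝ) * ((x : ℝ) + (y : ℝ))) / (q : ℝ) := by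
  subst hFq
  have hbad := card_not_forall_rank_encER_submatrix_eq_mul_le hkfx hconf hdiag 𝒜 fun A hA =>
    hkf ▸ le_sup (f := fun A : Finset (Fin x ⊕ Fin y) =>
      A.card - (Cbar.submatrix (Subtype.val : ↥A → Fin x ⊕ Fin y) id).rank) hA
  have hgood := one_sub_div_le_div_of_add_eq (card_filter_add_card_filter_not _) hbad
    Fintype.card_pos Fintype.card_pos
  rw [card_univ, Nat.cast_mul] at hgood
  have hxy : (𝒜.card * kf : ℝ) ≤ 𝒜.card * kf * (x + y) :=
    le_mul_of_one_le_right (by positivity) (by norm_cast; omega)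
  calc 1 - (𝒜.card * kf * (x + y) : ℝ) / Fintype.card F
      ≤ 1 - (𝒜.card * kf : ℝ) / Fintype.card F := by gcongr
    _ ≤ _ := hgood

/-- **Theorem 2 of the paper (security of the random code).**
With the cut matrix `C = [C'; I_y]`, a nonempty collection `𝒜` of wiretap row
sets, and a conforming matrix `C̄` whose bottom diagonal entries are nonzero
and whose submatrix `Ū_A` is rank-maximized for every `A ∈ 𝒜`, set
`k_f = max_{A∈𝒜}(|A| − rank Ū_A)` and assume `1 ≤ k_f ≤ x`.  For a uniformly
random `G ∈ F^{x×x}`, with probability at least `1 − |𝒜|·k_f·(x+y)/q` every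
submatrix `E^r_A` of the last `k_f + y` columns of the encoder has full row
rank `|A|`. -/
theorem random_code_secure_whp
    {x y q kf : ℕ} (hx : 0 < x) (hy : 0 < y)
    (F : Type) [Field F] [Fintype F] [DecidableEq F]
    (hFq : Fintype.card F = q)
    (C' : Matrix (Fin x) (Fin y) Bool)
    (𝒜 : Finset (Finset (Fin x ⊕ Fin y))) (h𝒜 : 𝒜.Nonempty)
    (Cbar : Matrix (Fin x ⊕ Fin y) (Fin y) F)
    (hconf : Conforms Cbar (stackC C'))
    (hdiag : ∀ j : Fin y, Cbar (Sum.inr j) j ≠ 0)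
    (hmax : ∀ A ∈ 𝒜, ∀ V : Matrix ↥A (Fin y) F,
        Conforms V ((stackC C').submatrix (Subtype.val : ↥A → Fin x ⊕ Fin y) id) →
        V.rank ≤ (Cbar.submatrix (Subtype.val : ↥A → Fin x ⊕ Fin y) id).rank)
    (hkf : kf = 𝒜.sup fun A =>
        A.card - (Cbar.submatrix (Subtype.val : ↥A → Fin x ⊕ Fin y) id).rank)
    (hkf1 : 1 ≤ kf) (hkfx : kf ≤ x) :
    ((Finset.univ.filter fun G : Matrix (Fin x) (Fin x) F =>
        ∀ A ∈ 𝒜,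
          ((encER hkfx G Cbar).submatrix
            (Subtype.val : ↥A → Fin x ⊕ Fin y) id).rank = A.card).card : ℝ) /
        (Fintype.card (Matrix (Fin x) (Fin x) F) : ℝ)
      ≥ 1 - ((𝒜.card : ℝ) * (kf : ℝ) * ((x : ℝ) + (y : ℝ))) / (q : ℝ) :=
  random_code_secure_whp_general hx F hFq C' 𝒜 Cbar hconf hdiag hkf hkfx
end

section
/- Let q be a prime power and let x, y be positive integers. Let C' ∈ {0,1}^{x×y}, let C be the (x+y)×y 0-1 matrix obtained by stacking C' on top of the y×y identity matrix I_y, and let 𝒜 be a nonempty finite collection of subsets of the row set {1,…,x+y}. Let C̄ ∈ F_q^{(x+y)×y} be a matrix conforming to C such that every diagonal entry of its bottom y×y block is nonzero and such that for every A ∈ 𝒜 the submatrix Ū_A of C̄ on the rows in A has rank equal to the maximal rank over all matrices conforming to U_A (the submatrix of C on rows A). Set k_f = max_{A∈𝒜} (|A| − rank(Ū_A)) and assume 1 ≤ k_f ≤ x. If q > |𝒜|·k_f·(x+y), then there exists a matrix G ∈ F_q^{x×x} such that, with E the (x+y)×(x+y) matrix whose first x columns are G stacked on the y×x zero matrix and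 whose last y columns are C̄, and E^r the matrix of the last k_f + y columns of E, the submatrix E^r_A has full row rank |A| for every A ∈ 𝒜. -/
/-!
Fix a wiretap set `A`. The backward rows of `C̄` are independent (their block is diagonal with
nonzero diagonal), so they extend to a basis of the row space of `Ū_A`; at most `k_f` rows of `A`
are left over, and they are forward rows. Giving them distinct unit vectors in the last `k_f`
columns of `G` makes the rows of `E^r_A` independent for this particular `G`. Hence some maximal
minor of `E^r_A`, read as a polynomial in the entries of `G`, is nonzero, of total degree at most
`|A| ≤ x + y`. The product of these `|𝒜|` minors has degree below `q`, so it does not vanish on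
all of `F_q^{x×x}`, and any point where it does not vanish is a `G` that works for every `A`.
-/

open scoped Classical

open Matrix MvPolynomial Module Submodule Set

namespace Matrix

variable {ι κ F : Type*} [Fintype ι] [DecidableEq ι] [Fintype κ] [Field F]

theorem exists_det_submatrix_ne_zero {M : Matrix ι κ F} (h : LinearIndependent F M.row) :
    ∃ f : ι → κ, (M.submatrix id f).det ≠ 0 := by
  have hspan : span F (range M.col) = ⊤ := by
    apply eq_top_of_finrank_eq
    rw [← rank_eq_finrank_span_cols, h.rank_matrix, finrank_fintype_fun_eq_card]
  obtain ⟨κ', a, -, hspan', hli⟩ := exists_linearIndependent' F M.col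
  let e := (Basis.mk hli (by rw [hspan', hspan])).indexEquiv (Pi.basisFun F ι)
  refine ⟨a ∘ e.symm, fun h0 => ?_⟩
  have hunit : IsUnit (M.submatrix id (a ∘ e.symm)) :=
    linearIndependent_cols_iff_isUnit.mp (hli.comp e.symm e.symm.injective)
  exact hunit.map detMonoidHom |>.ne_zero h0

omit [Fintype κ] in
theorem linearIndependent_row_of_det_submatrix_ne_zero {M : Matrix ι κ F} {f : ι → κ}
    (h : (M.submatrix id f).det ≠ 0) : LinearIndependent F M.row :=
  (linearIndependent_rows_of_det_ne_zero h).of_comp (LinearMap.funLeft F F f)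

end Matrix

namespace MvPolynomial

theorem totalDegree_det_le_s11 {n σ R : Type*} [Fintype n] [DecidableEq n] [CommRing R]
    (M : Matrix n n (MvPolynomial σ R)) (h : ∀ i j, (M i j).totalDegree ≤ 1) :
    M.det.totalDegree ≤ Fintype.card n := by
  rw [det_apply]
  refine (totalDegree_finsetSum _ _).trans (Finset.sup_le fun τ _ => ?_)
  have hprod : (∏ i, M (τ i) i).totalDegree ≤ Fintype.card n :=
    calc (∏ i, M (τ i) i).totalDegree ≤ ∑ i, (M (τ i) i).totalDegree := totalDegree_finsetProd _ _
      _ ≤ ∑ _i : n, 1 := Finset.sum_le_sum fun i _ => h (τ i) i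
      _ = Fintype.card n := by simp
  rcases Int.units_eq_one_or (Equiv.Perm.sign τ) with hs | hs <;> simpa [hs] using hprod

theorem exists_certificate_linearIndependent_row_eval {σ ι κ F : Type*} [Fintype ι]
    [DecidableEq ι] [Fintype κ] [Field F] (N : Matrix ι κ (MvPolynomial σ F))
    (hN : ∀ i j, (N i j).totalDegree ≤ 1) {w₀ : σ → F}
    (h₀ : LinearIndependent F (N.map (eval w₀)).row) :
    ∃ p : MvPolynomial σ F, p ≠ 0 ∧ p.totalDegree ≤ Fintype.card ι ∧
      ∀ w, eval w p ≠ 0 → LinearIndependent F (N.map (eval w)).row := by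
  obtain ⟨f, hf⟩ := exists_det_submatrix_ne_zero h₀
  have heval (w : σ → F) :
      eval w (N.submatrix id f).det = ((N.map (eval w)).submatrix id f).det := by
    rw [RingHom.map_det]
    rfl
  refine ⟨(N.submatrix id f).det, fun h0 => hf ?_, totalDegree_det_le_s11 _ fun i j => hN i (f j),
    fun w hw => linearIndependent_row_of_det_submatrix_ne_zero (f := f) ?_⟩
  · rw [← heval, h0, map_zero]
  · rwa [← heval]

universe u

-- `eq_zero_of_eval_eq_zero` needs `σ` and `F` in the same universe.
variable {σ F : Type u} [Field F] [Fintype F] [Finite σ]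

theorem exists_eval_ne_zero_of_totalDegree_lt {p : MvPolynomial σ F} (hp : p ≠ 0)
    (hdeg : p.totalDegree < Fintype.card F) : ∃ w, eval w p ≠ 0 := by
  by_contra! h
  exact hp <| eq_zero_of_eval_eq_zero _ _ p h <| restrictTotalDegree_le_restrictDegree σ F _ <|
    (mem_restrictTotalDegree _ _ _).mpr (Nat.le_sub_one_of_lt hdeg)

theorem exists_forall_eval_ne_zero_of_sum_totalDegree_lt {ι : Type*} [Fintype ι]
    {p : ι → MvPolynomial σ F} (hp : ∀ i, p i ≠ 0)
    (hdeg : ∑ i, (p i).totalDegree < Fintype.card F) : ∃ w, ∀ i, eval w (p i) ≠ 0 := by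
  obtain ⟨w, hw⟩ := exists_eval_ne_zero_of_totalDegree_lt
    (Finset.prod_ne_zero_iff.mpr fun i _ => hp i) ((totalDegree_finsetProd _ _).trans_lt hdeg)
  exact ⟨w, by simpa [map_prod, Finset.prod_ne_zero_iff] using hw⟩

end MvPolynomial

theorem exists_linearIndepOn_sumElim {ι κ F : Type*} [Field F] {k : ℕ} (v : ι → κ → F)
    {s : Set ι} {A : Finset ι} (hsA : s ⊆ A) (hs : LinearIndepOn F v s)
    (hA : A.card ≤ k + finrank F (span F (v '' A))) :
    ∃ w : ι → Fin k → F, (∀ a ∈ s, w a = 0) ∧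
      LinearIndepOn F (fun a => Sum.elim (w a) (v a)) A := by
  -- Extend `s` to `B ⊆ A` indexing a basis of the span; the at most `k` rows of `A \ B` get
  -- distinct unit vectors in the new coordinates, which separates them from `B` and each other.
  obtain ⟨b, hbA, hsb, hAb, hb⟩ := exists_linearIndepOn_extension hs hsA
  obtain ⟨B, rfl⟩ := (A.finite_toSet.subset hbA).exists_finset_coe
  have hBA : B ⊆ A := by exact_mod_cast hbA
  have hrank : finrank F (span F (v '' A)) = B.card := by
    rw [le_antisymm (span_le.mpr hAb) (span_mono (image_mono hbA)), image_eq_range,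
      finrank_span_eq_card hb]
    simp
  obtain ⟨π⟩ : Nonempty (↥(A \ B) ↪ Fin k) := by
    refine Function.Embedding.nonempty_of_card_le ?_
    rw [Fintype.card_coe, Fintype.card_fin, Finset.card_sdiff_of_subset hBA]
    omega
  set w : ι → Fin k → F := fun a => if h : a ∈ A \ B then Pi.single (π ⟨a, h⟩) 1 else 0
  refine ⟨w, fun a ha => dif_neg fun h => (Finset.mem_sdiff.mp h).2 (hsb ha), ?_⟩
  rw [linearIndepOn_finset_iff]
  intro g hg
  have hw : ∀ a (ha : a ∈ A \ B), ∑ a' ∈ A, g a' * w a' (π ⟨a, ha⟩) = g a := by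
    intro a ha
    rw [Finset.sum_eq_single_of_mem a (Finset.sdiff_subset ha) fun a' _ hne => ?_]
    · rw [show w a = _ from dif_pos ha, Pi.single_eq_same, mul_one]
    by_cases ha' : a' ∈ A \ B
    · have : π ⟨a, ha⟩ ≠ π ⟨a', ha'⟩ := fun h => hne congr($(π.injective h).val).symm
      rw [show w a' = _ from dif_pos ha', Pi.single_eq_of_ne this, mul_zero]
    · rw [show w a' = 0 from dif_neg ha', Pi.zero_apply, mul_zero]
  have hout : ∀ a ∈ A \ B, g a = 0 := fun a ha => by
    simpa [hw a ha, Finset.sum_apply] using congrFun hg (Sum.inl (π ⟨a, ha⟩))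
  have hin : ∑ a ∈ B, g a • v a = 0 := by
    rw [Finset.sum_subset hBA fun a ha haB => by rw [hout a (Finset.mem_sdiff.mpr ⟨ha, haB⟩),
      zero_smul]]
    ext j
    simpa [Finset.sum_apply] using congrFun hg (Sum.inr j)
  intro a ha
  by_cases haB : a ∈ B
  · exact linearIndepOn_finset_iff.mp hb g hin a haB
  · exact hout a (Finset.mem_sdiff.mpr ⟨ha, haB⟩)

section encER

variable {x y kf : ℕ} (hkfx : kf ≤ x)

theorem encER_map {F R : Type*} [Zero F] [Zero R] (f : F → R) (hf : f 0 = 0)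
    (G : Matrix (Fin x) (Fin x) F) (Cbar : Matrix (Fin x ⊕ Fin y) (Fin y) F) :
    (encER hkfx G Cbar).map f = encER hkfx (G.map f) (Cbar.map f) := by
  ext (i | j) (c | c) <;> simp [encER, hf]

theorem totalDegree_encER_le {σ F : Type*} [CommSemiring F] [Nontrivial F]
    (G : Matrix (Fin x) (Fin x) σ) (Cbar : Matrix (Fin x ⊕ Fin y) (Fin y) F) (r c) :
    (encER hkfx (G.map X) (Cbar.map C) r c : MvPolynomial σ F).totalDegree ≤ 1 := by
  rcases r with i | j <;> rcases c with c | c <;> simp [encER, totalDegree_X, totalDegree_C]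

theorem exists_linearIndepOn_encER {F : Type*} [Field F] {C' : Matrix (Fin x) (Fin y) Bool}
    {Cbar : Matrix (Fin x ⊕ Fin y) (Fin y) F} (hconf : Conforms Cbar (stackC C'))
    (hdiag : ∀ j, Cbar (Sum.inr j) j ≠ 0) {A : Finset (Fin x ⊕ Fin y)}
    (hA : A.card - (Cbar.submatrix (Subtype.val : ↥A → Fin x ⊕ Fin y) id).rank ≤ kf) :
    ∃ G, LinearIndepOn F (encER hkfx G Cbar).row A := by
  have hback : LinearIndepOn F Cbar.row (range Sum.inr) := by
    have hdiagonal : Cbar.submatrix Sum.inr id = diagonal fun j => Cbar (Sum.inr j) j := by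
      ext j j'
      by_cases h : j = j'
      · simp [h]
      · simp [diagonal_apply_ne _ h, hconf (Sum.inr j) j' (by simp [stackC, h])]
    rw [linearIndepOn_range_iff Sum.inr_injective]
    refine linearIndependent_rows_of_det_ne_zero (A := Cbar.submatrix Sum.inr id) ?_
    rw [hdiagonal, det_diagonal]
    exact Finset.prod_ne_zero_iff.mpr fun j _ => hdiag j
  have hrank : (Cbar.submatrix (Subtype.val : ↥A → _) id).rank =
      finrank F (span F (Cbar.row '' A)) := by
    rw [rank_eq_finrank_span_row, image_eq_range]
    rfl
  obtain ⟨w, hw0, hw⟩ := exists_linearIndepOn_sumElim (k := kf) (A := A) Cbar.row inter_subset_left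
    (hback.mono inter_subset_right) (by omega)
  have hlast : Function.Injective fun c : Fin kf => (⟨x - kf + c, by omega⟩ : Fin x) :=
    fun c c' h => Fin.ext (Nat.add_left_cancel (congrArg Fin.val h))
  refine ⟨of fun i => Function.extend (fun c : Fin kf => (⟨x - kf + c, by omega⟩ : Fin x))
    (w (Sum.inl i)) 0, hw.congr fun a ha => ?_⟩
  ext (c | c)
  · rcases a with i | j
    · exact (hlast.extend_apply _ _ c).symm
    · exact congrFun (hw0 _ ⟨ha, j, rfl⟩) c
  · rfl

end encER

theorem exists_secure_code_general
    {x y q kf : ℕ}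
    (F : Type) [Field F] [Fintype F]
    (hFq : Fintype.card F = q)
    (C' : Matrix (Fin x) (Fin y) Bool)
    (𝒜 : Finset (Finset (Fin x ⊕ Fin y)))
    (Cbar : Matrix (Fin x ⊕ Fin y) (Fin y) F)
    (hconf : Conforms Cbar (stackC C'))
    (hdiag : ∀ j : Fin y, Cbar (Sum.inr j) j ≠ 0)
    (hkf : kf = 𝒜.sup fun A =>
        A.card - (Cbar.submatrix (Subtype.val : ↥A → Fin x ⊕ Fin y) id).rank)
    (hkf1 : 1 ≤ kf) (hkfx : kf ≤ x)
    (hq : 𝒜.card * kf * (x + y) < q) :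
    ∃ G : Matrix (Fin x) (Fin x) F,
      ∀ A ∈ 𝒜,
        ((encER hkfx G Cbar).submatrix
          (Subtype.val : ↥A → Fin x ⊕ Fin y) id).rank = A.card := by
  -- `E^r` with the entries of `G` replaced by indeterminates
  set N := encER hkfx ((of Prod.mk).map X) (Cbar.map (C : F → MvPolynomial (Fin x × Fin x) F))
    with hN_def
  have hN : ∀ w, N.map (eval w) = encER hkfx (of fun i j => w (i, j)) Cbar := fun w => by
    rw [hN_def, encER_map hkfx _ (map_zero _)]
    congr 1 <;> ext <;> simp
  have key : ∀ A : 𝒜, ∃ p : MvPolynomial (Fin x × Fin x) F, p ≠ 0 ∧ p.totalDegree ≤ x + y ∧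
      ∀ w, eval w p ≠ 0 → LinearIndepOn F (N.map (eval w)).row A := by
    rintro ⟨A, hA⟩
    obtain ⟨G, hG⟩ := exists_linearIndepOn_encER hkfx hconf hdiag (hkf ▸ Finset.le_sup hA)
    obtain ⟨p, hp0, hpdeg, hp⟩ := exists_certificate_linearIndependent_row_eval
      (N.submatrix (Subtype.val : ↥A → _) id) (fun a c => totalDegree_encER_le hkfx _ _ a.1 c)
      (w₀ := fun ij : Fin x × Fin x => G ij.1 ij.2) (by rw [← submatrix_map, hN]; exact hG)
    exact ⟨p, hp0, hpdeg.trans (by simpa using A.card_le_univ), hp⟩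
  choose p hp0 hpdeg hp using key
  obtain ⟨w, hw⟩ := exists_forall_eval_ne_zero_of_sum_totalDegree_lt hp0 <|
    calc ∑ A, (p A).totalDegree ≤ ∑ _A : 𝒜, (x + y) := Finset.sum_le_sum fun A _ => hpdeg A
      _ = 𝒜.card * (x + y) := by simp
      _ ≤ 𝒜.card * kf * (x + y) := by gcongr; exact Nat.le_mul_of_pos_right _ hkf1
      _ < Fintype.card F := hFq ▸ hq
  refine ⟨of fun i j => w (i, j), fun A hA => ?_⟩
  rw [← hN]
  exact (hp ⟨A, hA⟩ w (hw _)).rank_matrix.trans (Fintype.card_coe A)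

/-- **Existence of a secure scalar linear code.**
With the cut matrix `C = [C'; I_y]`, a nonempty collection `𝒜` of wiretap row
sets, and a conforming matrix `C̄` whose bottom diagonal entries are nonzero
and whose submatrix `Ū_A` is rank-maximized for every `A ∈ 𝒜`, set
`k_f = max_{A∈𝒜}(|A| − rank Ū_A)` and assume `1 ≤ k_f ≤ x`.  If
`q > |𝒜|·k_f·(x+y)`, then there exists `G ∈ F^{x×x}` such that every submatrix
`E^r_A` of the last `k_f + y` columns of the encoder has full row rank `|A|`. -/
theorem exists_secure_code
    {x y q kf : ℕ} (hx : 0 < x) (hy : 0 < y)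
    (F : Type) [Field F] [Fintype F] [DecidableEq F]
    (hFq : Fintype.card F = q)
    (C' : Matrix (Fin x) (Fin y) Bool)
    (𝒜 : Finset (Finset (Fin x ⊕ Fin y))) (h𝒜 : 𝒜.Nonempty)
    (Cbar : Matrix (Fin x ⊕ Fin y) (Fin y) F)
    (hconf : Conforms Cbar (stackC C'))
    (hdiag : ∀ j : Fin y, Cbar (Sum.inr j) j ≠ 0)
    (hmax : ∀ A ∈ 𝒜, ∀ V : Matrix ↥A (Fin y) F,
        Conforms V ((stackC C').submatrix (Subtype.val : ↥A → Fin x ⊕ Fin y) id) →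
        V.rank ≤ (Cbar.submatrix (Subtype.val : ↥A → Fin x ⊕ Fin y) id).rank)
    (hkf : kf = 𝒜.sup fun A =>
        A.card - (Cbar.submatrix (Subtype.val : ↥A → Fin x ⊕ Fin y) id).rank)
    (hkf1 : 1 ≤ kf) (hkfx : kf ≤ x)
    (hq : 𝒜.card * kf * (x + y) < q) :
    ∃ G : Matrix (Fin x) (Fin x) F,
      ∀ A ∈ 𝒜,
        ((encER hkfx G Cbar).submatrix
          (Subtype.val : ↥A → Fin x ⊕ Fin y) id).rank = A.card :=
  exists_secure_code_general F hFq C' 𝒜 Cbar hconf hdiag hkf hkf1 hkfx hq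
end
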